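/- arXiv:1209.1808 — 6 statements merged into one kernel-verified Lean document; each statement's English description precedes it below -/
import Mathlib

section
/- Let H be a real Hilbert space, K a closed subspace of H, P : H → H the orthogonal projection onto K, I : H → ℝ a continuous linear functional, (Ω, 𝔉, ℙ) a probability space, θ ∈ (1/2, 1], and let Q assign to each f ∈ H a measurable, square-integrable function Q f : Ω → ℝ. Assume that for every f ∈ H with ‖f‖ ≤ 1 one has ℙ({ω ∈ Ω : (Q f)(ω) = (Q (P f))(ω)}) ≥ θ. Then for every f ∈ H with ‖f‖ ≤ 1 there exists g ∈ H with ‖g‖ ≤ 1 such that E[(I g − Q g)²] ≥ (2θ − 1) · (I f − I (P f))². -/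
/-! Put `h := f - P f`, so that `‖h‖ ≤ 1`, `P h = P (-h) = 0` and `I h = I f - I (P f)`.
Both `Q h` and `Q (-h)` agree with `Q 0` with probability at least `θ`, hence with each other
with probability at least `2θ - 1`. Where they agree, a common value `x` is a poor estimate of
both `I h` and `-I h`, because `(a - x)² + (-a - x)² ≥ 2a²`. So the mean squared errors at `h`
and `-h` sum to at least `2 (2θ - 1) (I h)²`, and one of them is at least half of that. -/

open MeasureTheory

section Projection

variable {𝕜 E : Type*} [RCLike 𝕜] [NormedAddCommGroup E] [InnerProductSpace 𝕜 E]
  (K : Submodule 𝕜 E) [K.HasOrthogonalProjection]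

theorem Submodule.norm_sub_starProjection_apply_le (v : E) :
    ‖v - K.starProjection v‖ ≤ ‖v‖ := by
  simpa using Kᗮ.norm_starProjection_apply_le v

theorem Submodule.starProjection_sub_starProjection_apply (v : E) :
    K.starProjection (v - K.starProjection v) = 0 :=
  K.starProjection_apply_eq_zero_iff.mpr (K.sub_starProjection_mem_orthogonal v)

end Projection

section Probability

variable {Ω : Type*} [MeasurableSpace Ω] {μ : Measure Ω}

theorem measureReal_add_measureReal_sub_one_le_inter [IsProbabilityMeasure μ] (s : Set Ω)
    {t : Set Ω} (ht : NullMeasurableSet t μ) :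
    μ.real s + μ.real t - 1 ≤ μ.real (s ∩ t) := by
  have := measureReal_union_add_inter₀ (s := s) ht
  linarith [measureReal_le_one (μ := μ) (s := s ∪ t)]

theorem two_mul_sq_mul_measureReal_le_integral_add [IsFiniteMeasure μ] {X Y : Ω → ℝ}
    (hX : MemLp X 2 μ) (hY : MemLp Y 2 μ) (a : ℝ) {s : Set Ω} (hs : NullMeasurableSet s μ)
    (hXY : ∀ ω ∈ s, X ω = Y ω) :
    2 * a ^ 2 * μ.real s ≤ ∫ ω, (a - X ω) ^ 2 ∂μ + ∫ ω, (-a - Y ω) ^ 2 ∂μ := by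
  have hXa : Integrable (fun ω ↦ (a - X ω) ^ 2) μ := ((memLp_const a).sub hX).integrable_sq
  have hYa : Integrable (fun ω ↦ (-a - Y ω) ^ 2) μ := ((memLp_const (-a)).sub hY).integrable_sq
  have hpt : ∀ ω ∈ s, 2 * a ^ 2 ≤ (a - X ω) ^ 2 + (-a - Y ω) ^ 2 := by
    intro ω hω
    rw [hXY ω hω]
    nlinarith [sq_nonneg (Y ω)]
  calc 2 * a ^ 2 * μ.real s = ∫ _ in s, 2 * a ^ 2 ∂μ := by
        rw [setIntegral_const, smul_eq_mul, mul_comm]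
    _ ≤ ∫ ω in s, ((a - X ω) ^ 2 + (-a - Y ω) ^ 2) ∂μ :=
      setIntegral_mono_ae_restrict integrableOn_const (hXa.add hYa).integrableOn
        ((ae_restrict_mem₀ hs).mono hpt)
    _ ≤ ∫ ω, ((a - X ω) ^ 2 + (-a - Y ω) ^ 2) ∂μ :=
      setIntegral_le_integral (hXa.add hYa) (.of_forall fun ω ↦ by positivity)
    _ = _ := integral_add hXa hYa

theorem two_mul_le_integral_sq_add_integral_sq [IsProbabilityMeasure μ] {X Y Z : Ω → ℝ}
    (hX : MemLp X 2 μ) (hY : MemLp Y 2 μ) (hZ : MemLp Z 2 μ) (a : ℝ) {θ : ℝ}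
    (hXZ : θ ≤ μ.real {ω | X ω = Z ω}) (hYZ : θ ≤ μ.real {ω | Y ω = Z ω}) :
    2 * ((2 * θ - 1) * a ^ 2) ≤ ∫ ω, (a - X ω) ^ 2 ∂μ + ∫ ω, (-a - Y ω) ^ 2 ∂μ := by
  have hXZ₀ := hX.aestronglyMeasurable.nullMeasurableSet_eq_fun hZ.aestronglyMeasurable
  have hYZ₀ := hY.aestronglyMeasurable.nullMeasurableSet_eq_fun hZ.aestronglyMeasurable
  have hinter := measureReal_add_measureReal_sub_one_le_inter {ω | X ω = Z ω} hYZ₀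
  calc 2 * ((2 * θ - 1) * a ^ 2)
      ≤ 2 * a ^ 2 * μ.real ({ω | X ω = Z ω} ∩ {ω | Y ω = Z ω}) := by
        nlinarith [sq_nonneg a]
    _ ≤ _ := two_mul_sq_mul_measureReal_le_integral_add hX hY a (hXZ₀.inter hYZ₀)
        fun ω hω ↦ hω.1.trans hω.2.symm

end Probability

theorem stmt1_general {H : Type*} [NormedAddCommGroup H] [InnerProductSpace ℝ H]
    (K : Submodule ℝ H) [CompleteSpace K]
    (I : H →L[ℝ] ℝ)
    {Ω : Type*} [MeasurableSpace Ω] (μ : Measure Ω) [IsProbabilityMeasure μ]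
    (θ : ℝ)
    (Q : H → Ω → ℝ)
    (hQL2 : ∀ f : H, MemLp (Q f) 2 μ)
    (hcoin : ∀ f : H, ‖f‖ ≤ 1 →
      ENNReal.ofReal θ ≤ μ {ω : Ω | Q f ω = Q ((K.orthogonalProjectionOnto f : K) : H) ω}) :
    ∀ f : H, ‖f‖ ≤ 1 → ∃ g : H, ‖g‖ ≤ 1 ∧
      (2 * θ - 1) * (I f - I ((K.orthogonalProjectionOnto f : K) : H)) ^ 2
        ≤ ∫ ω, (I g - Q g ω) ^ 2 ∂μ := by
  intro f hf
  simp only [← K.starProjection_apply] at hcoin ⊢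
  set h := f - K.starProjection f
  have hh : ‖h‖ ≤ 1 := (K.norm_sub_starProjection_apply_le f).trans hf
  have hnh : ‖-h‖ ≤ 1 := by rwa [norm_neg]
  have hPh : K.starProjection h = 0 := K.starProjection_sub_starProjection_apply f
  have hcoin₀ (g : H) (hg : ‖g‖ ≤ 1) (hPg : K.starProjection g = 0) :
      θ ≤ μ.real {ω | Q g ω = Q 0 ω} := by
    have := hcoin g hg
    rwa [hPg, ENNReal.ofReal_le_iff_le_toReal (measure_ne_top μ _)] at this
  have hsum := two_mul_le_integral_sq_add_integral_sq (hQL2 h) (hQL2 (-h)) (hQL2 0) (I h)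
    (hcoin₀ h hh hPh) (hcoin₀ (-h) hnh (by rw [map_neg, hPh, neg_zero]))
  rw [← map_neg] at hsum
  rw [← map_sub]
  by_cases hc : (2 * θ - 1) * I h ^ 2 ≤ ∫ ω, (I h - Q h ω) ^ 2 ∂μ
  · exact ⟨h, hh, hc⟩
  · exact ⟨-h, hnh, by linarith⟩

/-- Lemma 3 (abstract form): if a randomized algorithm `Q` satisfies
`ℙ(Q f = Q (P f)) ≥ θ` for all `f` in the unit ball, where `P` is the orthogonal
projection onto a (complete, i.e. closed) subspace `K`, then for every `f` in the
unit ball there is `g` in the unit ball with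
`E[(I g − Q g)²] ≥ (2θ − 1)·(I f − I (P f))²`. -/
theorem stmt1 {H : Type*} [NormedAddCommGroup H] [InnerProductSpace ℝ H]
    (K : Submodule ℝ H) [CompleteSpace K]
    (I : H →L[ℝ] ℝ)
    {Ω : Type*} [MeasurableSpace Ω] (μ : Measure Ω) [IsProbabilityMeasure μ]
    (θ : ℝ) (hθ : θ ∈ Set.Ioc (1 / 2 : ℝ) 1)
    (Q : H → Ω → ℝ)
    (hQmeas : ∀ f : H, Measurable (Q f))
    (hQL2 : ∀ f : H, MemLp (Q f) 2 μ)
    (hcoin : ∀ f : H, ‖f‖ ≤ 1 →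
      ENNReal.ofReal θ ≤ μ {ω : Ω | Q f ω = Q ((K.orthogonalProjectionOnto f : K) : H) ω}) :
    ∀ f : H, ‖f‖ ≤ 1 → ∃ g : H, ‖g‖ ≤ 1 ∧
      (2 * θ - 1) * (I f - I ((K.orthogonalProjectionOnto f : K) : H)) ^ 2
        ≤ ∫ ω, (I g - Q g ω) ^ 2 ∂μ :=
  stmt1_general K I μ θ Q hQL2 hcoin
end

section
/- Let (Ω, 𝔉, ℙ) be a probability space, X, Y : Ω → ℝ measurable functions with X² and Y² integrable, c ∈ ℝ, and p ∈ [0,1]. If ℙ({ω : X(ω) = Y(ω)}) ≥ p, then max( E[(c − X)²], E[(c + Y)²] ) ≥ p · c². -/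
open MeasureTheory

lemma mul_measureReal_le_integral_of_forall_le {α : Type*} [MeasurableSpace α] {μ : Measure α}
    [IsFiniteMeasure μ] {f : α → ℝ} {A : Set α} {a : ℝ} (ha : 0 ≤ a) (hf_nonneg : 0 ≤ᵐ[μ] f)
    (hf_int : Integrable f μ) (hA : ∀ x ∈ A, a ≤ f x) :
    a * μ.real A ≤ ∫ x, f x ∂μ :=
  (mul_le_mul_of_nonneg_left (measureReal_mono hA) ha).trans
    (mul_meas_ge_le_integral_of_nonneg hf_nonneg hf_int a)

lemma two_mul_sq_le_sq_sub_add_sq_add (c x : ℝ) : 2 * c ^ 2 ≤ (c - x) ^ 2 + (c + x) ^ 2 := by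
  nlinarith [sq_nonneg x]

theorem stmt2_general {Ω : Type*} [MeasurableSpace Ω] (μ : Measure Ω) [IsProbabilityMeasure μ]
    (X Y : Ω → ℝ)
    (hX2 : MemLp X 2 μ) (hY2 : MemLp Y 2 μ)
    (c p : ℝ)
    (hprob : ENNReal.ofReal p ≤ μ {ω : Ω | X ω = Y ω}) :
    p * c ^ 2 ≤ max (∫ ω, (c - X ω) ^ 2 ∂μ) (∫ ω, (c + Y ω) ^ 2 ∂μ) := by
  have hX_int : Integrable (fun ω => (c - X ω) ^ 2) μ := ((memLp_const c).sub hX2).integrable_sq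
  have hY_int : Integrable (fun ω => (c + Y ω) ^ 2) μ := ((memLp_const c).add hY2).integrable_sq
  have hp : p ≤ μ.real {ω | X ω = Y ω} :=
    (ENNReal.ofReal_le_iff_le_toReal (measure_ne_top μ _)).1 hprob
  have hsum : 2 * c ^ 2 * μ.real {ω | X ω = Y ω} ≤
      (∫ ω, (c - X ω) ^ 2 ∂μ) + ∫ ω, (c + Y ω) ^ 2 ∂μ := by
    rw [← integral_add hX_int hY_int]
    refine mul_measureReal_le_integral_of_forall_le (by positivity)
      (ae_of_all _ fun ω => by positivity) (hX_int.add hY_int) fun ω (hω : X ω = Y ω) => ?_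
    rw [hω]
    exact two_mul_sq_le_sq_sub_add_sq_add c (Y ω)
  nlinarith [le_max_left (∫ ω, (c - X ω) ^ 2 ∂μ) (∫ ω, (c + Y ω) ^ 2 ∂μ),
    le_max_right (∫ ω, (c - X ω) ^ 2 ∂μ) (∫ ω, (c + Y ω) ^ 2 ∂μ),
    mul_le_mul_of_nonneg_left hp (sq_nonneg c)]

/-- Core probabilistic step of Lemma 3: if `X = Y` with probability at least `p`,
then `max(E[(c − X)²], E[(c + Y)²]) ≥ p·c²`. -/
theorem stmt2 {Ω : Type*} [MeasurableSpace Ω] (μ : Measure Ω) [IsProbabilityMeasure μ]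
    (X Y : Ω → ℝ) (hX : Measurable X) (hY : Measurable Y)
    (hX2 : MemLp X 2 μ) (hY2 : MemLp Y 2 μ)
    (c p : ℝ) (hp0 : 0 ≤ p) (hp1 : p ≤ 1)
    (hprob : ENNReal.ofReal p ≤ μ {ω : Ω | X ω = Y ω}) :
    p * c ^ 2 ≤ max (∫ ω, (c - X ω) ^ 2 ∂μ) (∫ ω, (c + Y ω) ^ 2 ∂μ) :=
  stmt2_general μ X Y hX2 hY2 c p hprob
end

section
/- Let a : ℕ → ℝ be a nonnegative, nonincreasing, summable sequence (indexed starting from 1) and let p > 1. If the sequence (a_j · j^p)_{j≥1} does not converge to 0, then limsup_{τ→∞} τ^{p−1} · ∑_{j=τ+1}^∞ a_j > 0; equivalently, there is a constant c > 0 such that ∑_{j>τ} a_j ≥ c · τ^{1−p} for infinitely many τ ∈ ℕ. -/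
open Filter

/-- Tail-sum estimate: for a nonnegative, nonincreasing, summable sequence `a`
and `p > 1`, if `a j · j^p` does not tend to `0`, then there is `c > 0` such that
`∑_{j>τ} a j ≥ c · τ^(1−p)` for infinitely many `τ`. -/
theorem stmt4 (a : ℕ → ℝ) (ha0 : ∀ n, 0 ≤ a n) (hmono : Antitone a)
    (hsum : Summable a) (p : ℝ) (hp : 1 < p)
    (hnot : ¬ Tendsto (fun j : ℕ => a j * (j : ℝ) ^ p) atTop (nhds 0)) :
    ∃ c : ℝ, 0 < c ∧ ∀ N : ℕ, ∃ τ : ℕ, N ≤ τ ∧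
      c * (τ : ℝ) ^ (1 - p) ≤ ∑' j : {j : ℕ // τ < j}, a j := by
  have hp0 : (0:ℝ) ≤ p := le_of_lt (lt_trans one_pos hp)
  rw [Metric.tendsto_atTop] at hnot
  push_neg at hnot
  obtain ⟨ε, hε, hfreq⟩ := hnot
  refine ⟨ε / 3 ^ p, by positivity, ?_⟩
  intro N
  obtain ⟨j, hjN, hj⟩ := hfreq (max (2 * N) 2)
  have hj2 : 2 ≤ j := le_trans (le_max_right _ _) hjN
  have hjN' : 2 * N ≤ j := le_trans (le_max_left _ _) hjN
  set τ := j / 2 with hτdef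
  have hτN : N ≤ τ := by omega
  have hτ1 : 1 ≤ τ := by omega
  have hτj : τ < j := by omega
  have hj3 : j ≤ 3 * τ := by omega
  have hjτ : τ ≤ j - τ := by omega
  refine ⟨τ, hτN, ?_⟩
  have hjpos : (0:ℝ) < (j:ℝ) := by positivity
  have hτpos : (0:ℝ) < (τ:ℝ) := by exact_mod_cast hτ1
  -- from hj : ε ≤ dist (a j * j^p) 0
  have hε' : ε ≤ a j * (j:ℝ) ^ p := by
    have hnn : 0 ≤ a j * (j:ℝ) ^ p := mul_nonneg (ha0 j) (Real.rpow_nonneg hjpos.le p)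
    rwa [Real.dist_eq, sub_zero, abs_of_nonneg hnn] at hj
  have hjp_pos : (0:ℝ) < (j:ℝ) ^ p := Real.rpow_pos_of_pos hjpos p
  have haj : ε / (j:ℝ) ^ p ≤ a j := (div_le_iff₀ hjp_pos).mpr hε'
  -- tail sum ≥ finite sum over Ioc τ j
  have key : ∑ k ∈ Finset.Ioc τ j, a k ≤ ∑' k : {k : ℕ // τ < k}, a k := by
    have h1 : (∑' k : {k : ℕ // τ < k}, a k)
        = ∑' k : ℕ, Set.indicator {k : ℕ | τ < k} a k := tsum_subtype _ _
    rw [h1]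
    have h2 : ∑ k ∈ Finset.Ioc τ j, a k
        = ∑ k ∈ Finset.Ioc τ j, Set.indicator {k : ℕ | τ < k} a k := by
      refine Finset.sum_congr rfl fun x hx => ?_
      exact (Set.indicator_of_mem (show x ∈ {k : ℕ | τ < k} from (Finset.mem_Ioc.mp hx).1) a).symm
    rw [h2]
    exact Summable.sum_le_tsum _ (fun n _ => Set.indicator_nonneg (fun m _ => ha0 m) n)
      (hsum.indicator _)
  have hcard : ((j - τ : ℕ) : ℝ) * a j ≤ ∑ k ∈ Finset.Ioc τ j, a k := by
    have := Finset.card_nsmul_le_sum (Finset.Ioc τ j) a (a j)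
      (fun x hx => hmono (Finset.mem_Ioc.mp hx).2)
    rwa [Nat.card_Ioc, nsmul_eq_mul] at this
  -- final arithmetic
  have h3 : (j:ℝ) ^ p ≤ 3 ^ p * (τ:ℝ) ^ p := by
    have : (j:ℝ) ≤ 3 * (τ:ℝ) := by exact_mod_cast hj3
    calc (j:ℝ) ^ p ≤ (3 * (τ:ℝ)) ^ p := Real.rpow_le_rpow hjpos.le this hp0
      _ = 3 ^ p * (τ:ℝ) ^ p := Real.mul_rpow (by norm_num) hτpos.le
  have hτrpow : (τ:ℝ) ^ (1 - p) = (τ:ℝ) / (τ:ℝ) ^ p := by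
    rw [Real.rpow_sub hτpos, Real.rpow_one]
  have hfinal : ε / 3 ^ p * (τ:ℝ) ^ (1 - p) ≤ ((j - τ : ℕ) : ℝ) * a j := by
    have hτle : (τ:ℝ) ≤ ((j - τ : ℕ) : ℝ) := by exact_mod_cast hjτ
    calc ε / 3 ^ p * (τ:ℝ) ^ (1 - p) = ε * (τ:ℝ) / (3 ^ p * (τ:ℝ) ^ p) := by
          rw [hτrpow]; ring
      _ ≤ ε * (τ:ℝ) / (j:ℝ) ^ p := by
          apply div_le_div_of_nonneg_left (by positivity) hjp_pos h3
      _ = (τ:ℝ) * (ε / (j:ℝ) ^ p) := by ring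
      _ ≤ ((j - τ : ℕ) : ℝ) * a j := by
          apply mul_le_mul hτle haj (by positivity) (by positivity)
  linarith
end

section
/- Let D be a set, k : D × D → ℝ a kernel with k(x,x) ≥ 0 for all x ∈ D and k(x,y)² ≤ k(x,x)·k(y,y) for all x, y ∈ D, let 𝒰 denote the set of finite subsets of ℕ, and let γ : 𝒰 → [0,∞). For u ∈ 𝒰 and x, y ∈ D^ℕ set k_u(x,y) := ∏_{j∈u} k(x_j, y_j) (with k_∅ ≡ 1). If x, y ∈ D^ℕ satisfy A_x := ∑_{u∈𝒰} γ_u k_u(x,x) < ∞ and A_y := ∑_{u∈𝒰} γ_u k_u(y,y) < ∞, then the family (γ_u k_u(x,y))_{u∈𝒰} is absolutely summable and ∑_{u∈𝒰} γ_u |k_u(x,y)| ≤ √(A_x · A_y). -/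
/-- Well-definedness of the weighted kernel `K_γ`: if
`A_x = ∑_u γ_u k_u(x,x) < ∞` and `A_y = ∑_u γ_u k_u(y,y) < ∞`, then the family
`(γ_u k_u(x,y))_u` is absolutely summable with
`∑_u γ_u |k_u(x,y)| ≤ √(A_x · A_y)`. -/
theorem stmt12 {D : Type*} (k : D → D → ℝ)
    (hdiag : ∀ x, 0 ≤ k x x)
    (hcs : ∀ x y, k x y ^ 2 ≤ k x x * k y y)
    (γ : Finset ℕ → ℝ) (hγ : ∀ u, 0 ≤ γ u)
    (x y : ℕ → D)
    (hx : Summable fun u : Finset ℕ => γ u * ∏ j ∈ u, k (x j) (x j))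
    (hy : Summable fun u : Finset ℕ => γ u * ∏ j ∈ u, k (y j) (y j)) :
    (Summable fun u : Finset ℕ => γ u * |∏ j ∈ u, k (x j) (y j)|) ∧
      (∑' u : Finset ℕ, γ u * |∏ j ∈ u, k (x j) (y j)|)
        ≤ Real.sqrt ((∑' u : Finset ℕ, γ u * ∏ j ∈ u, k (x j) (x j)) *
            (∑' u : Finset ℕ, γ u * ∏ j ∈ u, k (y j) (y j))) := by
  set F : Finset ℕ → ℝ := fun u => γ u * ∏ j ∈ u, k (x j) (x j) with hF
  set G : Finset ℕ → ℝ := fun u => γ u * ∏ j ∈ u, k (y j) (y j) with hG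
  have hFnn : ∀ u, 0 ≤ F u := fun u =>
    mul_nonneg (hγ u) (Finset.prod_nonneg fun j _ => hdiag (x j))
  have hGnn : ∀ u, 0 ≤ G u := fun u =>
    mul_nonneg (hγ u) (Finset.prod_nonneg fun j _ => hdiag (y j))
  -- pointwise bound
  have key : ∀ u : Finset ℕ,
      γ u * |∏ j ∈ u, k (x j) (y j)| ≤ Real.sqrt (F u) * Real.sqrt (G u) := by
    intro u
    have h1 : (∏ j ∈ u, k (x j) (y j)) ^ 2 ≤
        (∏ j ∈ u, k (x j) (x j)) * ∏ j ∈ u, k (y j) (y j) := by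
      rw [← Finset.prod_pow, ← Finset.prod_mul_distrib]
      exact Finset.prod_le_prod (fun j _ => sq_nonneg _) (fun j _ => hcs (x j) (y j))
    have h2 : |∏ j ∈ u, k (x j) (y j)| ≤
        Real.sqrt ((∏ j ∈ u, k (x j) (x j)) * ∏ j ∈ u, k (y j) (y j)) := by
      rw [← Real.sqrt_sq_eq_abs]
      exact Real.sqrt_le_sqrt h1
    calc γ u * |∏ j ∈ u, k (x j) (y j)|
        ≤ γ u * Real.sqrt ((∏ j ∈ u, k (x j) (x j)) * ∏ j ∈ u, k (y j) (y j)) :=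
          mul_le_mul_of_nonneg_left h2 (hγ u)
      _ = Real.sqrt (F u) * Real.sqrt (G u) := by
          have hg2 : Real.sqrt (γ u) * Real.sqrt (γ u) = γ u := Real.mul_self_sqrt (hγ u)
          rw [show F u = γ u * ∏ j ∈ u, k (x j) (x j) from rfl,
            show G u = γ u * ∏ j ∈ u, k (y j) (y j) from rfl,
            Real.sqrt_mul (hγ u), Real.sqrt_mul (hγ u),
            Real.sqrt_mul (Finset.prod_nonneg fun (j : ℕ) _ => hdiag (x j))]
          linear_combination (-(Real.sqrt (∏ j ∈ u, k (x j) (x j)) *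
            Real.sqrt (∏ j ∈ u, k (y j) (y j)))) * hg2
  have hsum : Summable fun u : Finset ℕ => γ u * |∏ j ∈ u, k (x j) (y j)| := by
    apply Summable.of_nonneg_of_le
      (fun u => mul_nonneg (hγ u) (abs_nonneg _)) key
    -- √(F u)·√(G u) ≤ (F u + G u)/2... easier: summable since bounded by (F+G)/2
    have : Summable fun u => (F u + G u) / 2 := ((hx.add hy).div_const 2)
    refine this.of_nonneg_of_le (fun u => mul_nonneg (Real.sqrt_nonneg _) (Real.sqrt_nonneg _))
      (fun u => ?_)
    nlinarith [Real.sq_sqrt (hFnn u), Real.sq_sqrt (hGnn u),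
      sq_nonneg (Real.sqrt (F u) - Real.sqrt (G u))]
  refine ⟨hsum, ?_⟩
  have hAx : 0 ≤ ∑' u, F u := tsum_nonneg hFnn
  have hAy : 0 ≤ ∑' u, G u := tsum_nonneg hGnn
  rw [Real.sqrt_mul hAx]
  refine Summable.tsum_le_of_sum_le hsum fun s => ?_
  calc ∑ u ∈ s, γ u * |∏ j ∈ u, k (x j) (y j)|
      ≤ ∑ u ∈ s, Real.sqrt (F u) * Real.sqrt (G u) := Finset.sum_le_sum fun u _ => key u
    _ ≤ Real.sqrt (∑ u ∈ s, F u) * Real.sqrt (∑ u ∈ s, G u) :=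
        Real.sum_sqrt_mul_sqrt_le s hFnn hGnn
    _ ≤ Real.sqrt (∑' u, F u) * Real.sqrt (∑' u, G u) :=
        mul_le_mul (Real.sqrt_le_sqrt (Summable.sum_le_tsum s (fun u _ => hFnn u) hx))
          (Real.sqrt_le_sqrt (Summable.sum_le_tsum s (fun u _ => hGnn u) hy))
          (Real.sqrt_nonneg _) (Real.sqrt_nonneg _)
end

section
/- Let D be a set, k : D × D → ℝ a symmetric positive semidefinite kernel (for every n ∈ ℕ, all x₁,…,xₙ ∈ D and all real c₁,…,cₙ, ∑_{i,j=1}^n c_i c_j k(x_i,x_j) ≥ 0), 𝒰 the set of finite subsets of ℕ, γ : 𝒰 → [0,∞), and 𝒳 := { x ∈ D^ℕ : ∑_{u∈𝒰} γ_u ∏_{j∈u} k(x_j,x_j) < ∞ }. Then K_γ(x,y) := ∑_{u∈𝒰} γ_u ∏_{j∈u} k(x_j,y_j) converges absolutely for all x, y ∈ 𝒳, is symmetric, and is positive semidefinite on 𝒳: for every n ∈ ℕ, all x⁽¹⁾,…,x⁽ⁿ⁾ ∈ 𝒳 and all reals c₁,…,cₙ, ∑_{i,j=1}^n c_i c_j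 K_γ(x⁽ⁱ⁾, x⁽ʲ⁾) ≥ 0. -/
/-!
Mathlib's `Matrix.PosSemidef` is defined for arbitrary index types by testing against finitely
supported vectors, so a positive semidefinite kernel on `X` is just a positive semidefinite
`Matrix X X ℝ`. By the Schur product theorem each summand `(x, y) ↦ γ_u ∏_{j∈u} k(x_j, y_j)` is
such a kernel on `D^ℕ`. Its quadratic form at `(1, ±1)` bounds `|γ_u ∏_{j∈u} k(x_j, y_j)|` by
the mean of the two diagonal terms, which gives absolute convergence on `𝒳`, and a convergent
sum of nonnegative quadratic forms is nonnegative.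
-/

namespace Matrix

variable {α : Type*}

theorem PosSemidef.sum_mul_nonneg {M : Matrix α α ℝ} (hM : M.PosSemidef)
    {ι : Type*} [Fintype ι] (x : ι → α) (c : ι → ℝ) :
    0 ≤ ∑ i, ∑ j, c i * c j * M (x i) (x j) := by
  classical
  have := (hM.submatrix x).2 (Finsupp.equivFunOnFinite.symm c)
  simpa [Finsupp.sum_fintype, mul_comm, mul_left_comm, mul_assoc] using this

theorem posSemidef_of_forall_fin_sum_mul_nonneg {M : Matrix α α ℝ}
    (hsymm : ∀ a b, M a b = M b a)
    (hM : ∀ (n : ℕ) (x : Fin n → α) (c : Fin n → ℝ), 0 ≤ ∑ i, ∑ j, c i * c j * M (x i) (x j)) :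
    M.PosSemidef := by
  refine ⟨funext₂ fun a b => hsymm b a, fun v => ?_⟩
  let e := v.support.equivFin
  calc 0 ≤ ∑ i, ∑ j, v (e.symm i) * v (e.symm j) * M (e.symm i) (e.symm j) := hM _ _ _
    _ = ∑ a : v.support, ∑ b : v.support, v a * v b * M a b := by
      rw [e.symm.sum_comp fun a => ∑ j, v a * v (e.symm j) * M a (e.symm j)]
      exact Finset.sum_congr rfl fun a _ => e.symm.sum_comp fun b => v a * v b * M a b
    _ = v.sum fun a va => v.sum fun b vb => star va * M a b * vb := by
      simp only [Finsupp.sum, star_trivial, ← Finset.sum_coe_sort v.support, mul_right_comm]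

theorem PosSemidef.abs_apply_le {M : Matrix α α ℝ} (hM : M.PosSemidef) (a b : α) :
    |M a b| ≤ (M a a + M b b) / 2 := by
  have hsymm : M b a = M a b := hM.isHermitian.apply a b
  have hplus := hM.sum_mul_nonneg ![a, b] ![1, 1]
  have hminus := hM.sum_mul_nonneg ![a, b] ![1, -1]
  simp only [Fin.sum_univ_two, Matrix.cons_val_zero, Matrix.cons_val_one, hsymm] at hplus hminus
  rw [abs_le]
  constructor <;> linarith

theorem posSemidef_of_const_one : (of fun _ _ => 1 : Matrix α α ℝ).PosSemidef :=
  posSemidef_of_forall_fin_sum_mul_nonneg (fun _ _ => rfl) fun _ _ c => by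
    simpa only [of_apply, mul_one, ← Finset.sum_mul_sum] using mul_self_nonneg (∑ i, c i)

theorem PosSemidef.prod_eval {k : Matrix α α ℝ} (hk : k.PosSemidef) {ι : Type*} (u : Finset ι) :
    (of fun x y : ι → α => ∏ j ∈ u, k (x j) (y j)).PosSemidef := by
  classical
  induction u using Finset.induction_on with
  | empty => simpa only [Finset.prod_empty] using posSemidef_of_const_one
  | insert a s ha ih =>
    have hsplit : (of fun x y : ι → α => ∏ j ∈ insert a s, k (x j) (y j))
        = k.submatrix (fun x => x a) (fun x => x a) ⊙ of fun x y => ∏ j ∈ s, k (x j) (y j) := by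
      ext x y
      simp only [Finset.prod_insert ha, of_apply, hadamard_apply, submatrix_apply]
    rw [hsplit]
    exact (hk.submatrix _).hadamard ih

theorem PosSemidef.sum_mul_tsum_nonneg {β : Type*} {K : β → Matrix α α ℝ}
    (hK : ∀ u, (K u).PosSemidef) {ι : Type*} [Fintype ι] (x : ι → α) (c : ι → ℝ)
    (hs : ∀ i j, Summable fun u => K u (x i) (x j)) :
    0 ≤ ∑ i, ∑ j, c i * c j * ∑' u, K u (x i) (x j) := by
  have hswap : ∑ i, ∑ j, c i * c j * ∑' u, K u (x i) (x j)
      = ∑' u, ∑ i, ∑ j, c i * c j * K u (x i) (x j) := by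
    rw [Summable.tsum_finsetSum fun i _ => summable_sum fun j _ => (hs i j).mul_left _]
    refine Finset.sum_congr rfl fun i _ => ?_
    rw [Summable.tsum_finsetSum fun j _ => (hs i j).mul_left _]
    simp only [tsum_mul_left]
  rw [hswap]
  exact tsum_nonneg fun u => (hK u).sum_mul_nonneg x c

end Matrix

/-- The weighted kernel `K_γ(x,y) = ∑_u γ_u ∏_{j∈u} k(x_j,y_j)` of a symmetric
positive semidefinite kernel `k` converges absolutely on the domain
`𝒳 = {x : ∑_u γ_u ∏_{j∈u} k(x_j,x_j) < ∞}`, is symmetric, and is positive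
semidefinite on `𝒳`. -/
theorem stmt14 {D : Type*} (k : D → D → ℝ)
    (hsymm : ∀ x y, k x y = k y x)
    (hpsd : ∀ (n : ℕ) (x : Fin n → D) (c : Fin n → ℝ),
      0 ≤ ∑ i, ∑ j, c i * c j * k (x i) (x j))
    (γ : Finset ℕ → ℝ) (hγ : ∀ u, 0 ≤ γ u) :
    (∀ x y : ℕ → D,
        (Summable fun u : Finset ℕ => γ u * ∏ j ∈ u, k (x j) (x j)) →
        (Summable fun u : Finset ℕ => γ u * ∏ j ∈ u, k (y j) (y j)) →
        Summable fun u : Finset ℕ => |γ u * ∏ j ∈ u, k (x j) (y j)|) ∧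
      (∀ x y : ℕ → D,
        (∑' u : Finset ℕ, γ u * ∏ j ∈ u, k (x j) (y j))
          = ∑' u : Finset ℕ, γ u * ∏ j ∈ u, k (y j) (x j)) ∧
      (∀ (n : ℕ) (x : Fin n → (ℕ → D)) (c : Fin n → ℝ),
        (∀ i, Summable fun u : Finset ℕ => γ u * ∏ j ∈ u, k (x i j) (x i j)) →
        0 ≤ ∑ i, ∑ j, c i * c j *
              ∑' u : Finset ℕ, γ u * ∏ l ∈ u, k (x i l) (x j l)) := by
  have hk : (Matrix.of k).PosSemidef := Matrix.posSemidef_of_forall_fin_sum_mul_nonneg hsymm hpsd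
  have hK (u : Finset ℕ) :
      (γ u • Matrix.of fun x y : ℕ → D => ∏ j ∈ u, k (x j) (y j)).PosSemidef :=
    (hk.prod_eval u).smul (hγ u)
  have habs (x y : ℕ → D)
      (hx : Summable fun u : Finset ℕ => γ u * ∏ j ∈ u, k (x j) (x j))
      (hy : Summable fun u : Finset ℕ => γ u * ∏ j ∈ u, k (y j) (y j)) :
      Summable fun u : Finset ℕ => |γ u * ∏ j ∈ u, k (x j) (y j)| :=
    ((hx.add hy).div_const 2).of_nonneg_of_le (fun _ => abs_nonneg _)
      fun u => (hK u).abs_apply_le x y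
  refine ⟨habs, fun x y => tsum_congr fun u => ?_, fun n x c hx => ?_⟩
  · simp only [hsymm (x _)]
  · exact Matrix.PosSemidef.sum_mul_tsum_nonneg hK x c fun i j => (habs _ _ (hx i) (hx j)).of_abs
end

section
/- Let ρ ∈ ℕ and let 𝒮 be a set of nonempty finite subsets of ℕ such that for every u ∈ 𝒮 the number of sets w ∈ 𝒮 with u ∩ w ≠ ∅ is at most 1 + ρ. Then for every finite set v ⊆ ℕ, the number of sets u ∈ 𝒮 with u ⊆ v is at most (1 + ρ) · |v|. -/
/-!
Every member of `𝒮` lying in `v` is nonempty, so it contains some `a ∈ v`; hence such members are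
covered by the `|v|` stars `{u ∈ 𝒮 | a ∈ u}`, `a ∈ v`. Any two members of a star intersect, so a
nonempty star lies in the set of members meeting one fixed member, and has at most `1 + ρ`
elements.
-/

namespace Finset

variable {α : Type*} {𝒮 : Set (Finset α)}

theorem encard_star_le [DecidableEq α] {k : ℕ∞}
    (h : ∀ u ∈ 𝒮, {w | w ∈ 𝒮 ∧ (u ∩ w).Nonempty}.encard ≤ k) (a : α) :
    {u | u ∈ 𝒮 ∧ a ∈ u}.encard ≤ k := by
  rcases Set.eq_empty_or_nonempty {u | u ∈ 𝒮 ∧ a ∈ u} with hempty | ⟨u, hu𝒮, hau⟩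
  · simp [hempty]
  · refine le_trans (Set.encard_le_encard ?_) (h u hu𝒮)
    rintro w ⟨hw𝒮, haw⟩
    exact ⟨hw𝒮, a, mem_inter.2 ⟨hau, haw⟩⟩

theorem setOf_subset_subset_biUnion_star (hne : ∀ u ∈ 𝒮, u.Nonempty) (v : Finset α) :
    {u | u ∈ 𝒮 ∧ u ⊆ v} ⊆ ⋃ a ∈ v, {u | u ∈ 𝒮 ∧ a ∈ u} := by
  rintro u ⟨hu𝒮, huv⟩
  obtain ⟨a, hau⟩ := hne u hu𝒮
  exact Set.mem_biUnion (huv hau) ⟨hu𝒮, hau⟩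

theorem encard_setOf_subset_le_card_mul [DecidableEq α] (hne : ∀ u ∈ 𝒮, u.Nonempty) {k : ℕ∞}
    (h : ∀ u ∈ 𝒮, {w | w ∈ 𝒮 ∧ (u ∩ w).Nonempty}.encard ≤ k) (v : Finset α) :
    {u | u ∈ 𝒮 ∧ u ⊆ v}.encard ≤ v.card * k :=
  calc {u | u ∈ 𝒮 ∧ u ⊆ v}.encard
      ≤ (⋃ a ∈ v, {u | u ∈ 𝒮 ∧ a ∈ u}).encard :=
        Set.encard_le_encard (setOf_subset_subset_biUnion_star hne v)
    _ ≤ ∑ a ∈ v, {u | u ∈ 𝒮 ∧ a ∈ u}.encard := v.set_encard_biUnion_le _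
    _ ≤ ∑ _a ∈ v, k := sum_le_sum fun a _ ↦ encard_star_le h a
    _ = v.card * k := by rw [sum_const, nsmul_eq_mul]

end Finset

/-- Finite-intersection weights: if every `u ∈ 𝒮` meets at most `1 + ρ` members
of `𝒮`, then at most `(1 + ρ)·|v|` members of `𝒮` are contained in any finite
set `v` (i.e. `t*_σ = 1`). -/
theorem stmt17 (ρ : ℕ) (𝒮 : Set (Finset ℕ))
    (hne : ∀ u ∈ 𝒮, u.Nonempty)
    (hint : ∀ u ∈ 𝒮, {w | w ∈ 𝒮 ∧ (u ∩ w).Nonempty}.encard ≤ (1 + ρ : ℕ)) :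
    ∀ v : Finset ℕ, {u | u ∈ 𝒮 ∧ u ⊆ v}.encard ≤ ((1 + ρ) * v.card : ℕ) := by
  intro v
  rw [mul_comm, Nat.cast_mul]
  exact Finset.encard_setOf_subset_le_card_mul hne hint v
end
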